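/- Let L be a Heyting algebra, μ a fuzzy subset of L, and μ′ : L → ℝ defined by μ′(x) = sup { min(μ(x₁), …, μ(xₙ)) : n ≥ 1, x₁, …, xₙ ∈ L, x ≤ x₁ ⊞ ⋯ ⊞ xₙ }. Then μ(x) ≤ μ′(x) for all x ∈ L, and for every fuzzy ideal ν of L with μ(x) ≤ ν(x) for all x, one has μ′(x) ≤ ν(x) for all x; that is, μ′ is the smallest fuzzy ideal of L containing μ (the fuzzy ideal generated by μ). -/
import Mathlib


variable {L : Type*} [HeytingAlgebra L]

/-- `x ⊎ y := x* ⇨ y` where `x* = xᶜ = x ⇨ ⊥`. -/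
def uplus (x y : L) : L := xᶜ ⇨ y

/-- `x ⊞ y := x* ⇨ (y*)*`. -/
def boxplus (x y : L) : L := xᶜ ⇨ yᶜᶜ

/-- `x₁ ⊞ x₂ ⊞ ⋯ ⊞ xₙ` for a nonempty list `[x₁, …, xₙ]` (junk value `⊥` on `[]`). -/
def boxFold : List L → L
  | [] => ⊥
  | [a] => a
  | a :: l => boxplus a (boxFold l)

/-- `min(t₁, …, tₙ)` for a nonempty list `[t₁, …, tₙ]` of reals (junk value `1` on `[]`). -/
def minFold : List ℝ → ℝ
  | [] => 1
  | [a] => a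
  | a :: l => min a (minFold l)

/-- A fuzzy ideal of `L`: a fuzzy subset (values in `[0,1]`) that is antitone and
satisfies `μ(x ⊎ y) ≥ min(μ(x), μ(y))`. -/
def FuzzyIdeal (μ : L → ℝ) : Prop :=
  (∀ x, 0 ≤ μ x ∧ μ x ≤ 1) ∧
  (∀ x y, x ≤ y → μ y ≤ μ x) ∧
  (∀ x y, min (μ x) (μ y) ≤ μ (uplus x y))

/-- `μ′(x) = sup { min(μ(x₁), …, μ(xₙ)) : n ≥ 1, x ≤ x₁ ⊞ ⋯ ⊞ xₙ }`. -/
noncomputable def fuzzyGen (μ : L → ℝ) (x : L) : ℝ :=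
  sSup {t : ℝ | ∃ l : List L, l ≠ [] ∧ x ≤ boxFold l ∧ t = minFold (l.map μ)}

/-! ### Auxiliary lemmas -/

lemma boxFold_cons (a : L) (l : List L) (hl : l ≠ []) :
    boxFold (a :: l) = boxplus a (boxFold l) := by
  cases l with
  | nil => exact absurd rfl hl
  | cons b m => rfl

lemma minFold_cons (a : ℝ) (l : List ℝ) (hl : l ≠ []) :
    minFold (a :: l) = min a (minFold l) := by
  cases l with
  | nil => exact absurd rfl hl
  | cons b m => rfl

lemma boxplus_eq (a b : L) : boxplus a b = (a ⊔ b)ᶜᶜ := by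
  unfold boxplus
  rw [compl_sup, ← himp_bot (aᶜ ⊓ bᶜ), ← himp_himp, himp_bot]

def listSup : List L → L := fun l => l.foldr (· ⊔ ·) ⊥

lemma listSup_cons (a : L) (l : List L) : listSup (a :: l) = a ⊔ listSup l := rfl

lemma listSup_append (l l' : List L) : listSup (l ++ l') = listSup l ⊔ listSup l' := by
  induction l with
  | nil => simp [listSup]
  | cons a m ih => simp [listSup_cons, ih, sup_assoc]

lemma listSup_le_boxFold (l : List L) : listSup l ≤ boxFold l := by
  induction l with
  | nil => simp [listSup, boxFold]
  | cons a m ih =>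
    cases m with
    | nil => simp [listSup, boxFold]
    | cons b m' =>
      rw [boxFold_cons a _ (by simp), listSup_cons, boxplus_eq]
      exact le_trans (sup_le_sup_left ih a) (le_compl_compl)

lemma boxFold_le (l : List L) (hl : l ≠ []) : boxFold l ≤ (listSup l)ᶜᶜ := by
  cases l with
  | nil => exact absurd rfl hl
  | cons a m =>
    cases m with
    | nil => simpa [boxFold, listSup] using le_compl_compl
    | cons b m' =>
      rw [boxFold_cons a _ (by simp), boxplus_eq, listSup_cons]
      have h := boxFold_le (b :: m') (by simp)
      have h2 : (a ⊔ boxFold (b :: m'))ᶜᶜ ≤ (a ⊔ (listSup (b :: m'))ᶜᶜ)ᶜᶜ :=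
        compl_anti (compl_anti (sup_le_sup_left h a))
      have h3 : (a ⊔ (listSup (b :: m'))ᶜᶜ)ᶜ = (a ⊔ listSup (b :: m'))ᶜ := by
        rw [compl_sup, compl_sup, compl_compl_compl]
      rw [← h3]
      exact h2

lemma compl_compl_le_boxFold (a : L) (l : List L) (hl : l ≠ []) :
    (listSup (a :: l))ᶜᶜ ≤ boxFold (a :: l) := by
  rw [boxFold_cons a l hl, boxplus_eq, listSup_cons]
  exact compl_anti (compl_anti (sup_le_sup_left (listSup_le_boxFold l) a))

lemma uplus_le_boxFold_append (x y : L) (l l' : List L) (hl : l ≠ []) (hl' : l' ≠ [])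
    (hx : x ≤ boxFold l) (hy : y ≤ boxFold l') :
    uplus x y ≤ boxFold (l ++ l') := by
  cases l with
  | nil => exact absurd rfl hl
  | cons a m =>
    have h1 : uplus x y ≤ (x ⊔ y)ᶜᶜ := by
      rw [← boxplus_eq]
      exact himp_le_himp_left (le_compl_compl)
    have h2 : x ⊔ y ≤ (listSup (a :: m))ᶜᶜ ⊔ (listSup l')ᶜᶜ :=
      sup_le_sup (hx.trans (boxFold_le _ (by simp))) (hy.trans (boxFold_le _ hl'))
    have h3 : ((listSup (a :: m))ᶜᶜ ⊔ (listSup l')ᶜᶜ)ᶜ = (listSup (a :: m) ⊔ listSup l')ᶜ := by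
      rw [compl_sup, compl_sup, compl_compl_compl, compl_compl_compl]
    have h4 : (x ⊔ y)ᶜᶜ ≤ (listSup (a :: m) ⊔ listSup l')ᶜᶜ := by
      rw [← h3]
      exact compl_anti (compl_anti h2)
    refine h1.trans (h4.trans ?_)
    rw [← listSup_append]
    rcases List.exists_cons_of_ne_nil hl' with ⟨b, m', rfl⟩
    have : ((a :: m) ++ b :: m') = a :: (m ++ b :: m') := rfl
    rw [this]
    exact compl_compl_le_boxFold a _ (by simp)

lemma minFold_append (l l' : List ℝ) (hl : l ≠ []) (hl' : l' ≠ []) :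
    minFold (l ++ l') = min (minFold l) (minFold l') := by
  induction l with
  | nil => exact absurd rfl hl
  | cons a m ih =>
    cases m with
    | nil =>
      rw [List.singleton_append, minFold_cons a l' hl']
      rfl
    | cons b m' =>
      have h := ih (by simp)
      have : (a :: b :: m') ++ l' = a :: ((b :: m') ++ l') := rfl
      rw [this, minFold_cons a _ (by simp), h, minFold_cons a _ (by simp), min_assoc]

lemma minFold_le_one (l : List ℝ) (h : ∀ t ∈ l, t ≤ 1) : minFold l ≤ 1 := by
  induction l with
  | nil => simp [minFold]
  | cons a m ih =>
    cases m with
    | nil => simpa [minFold] using h a (by simp)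
    | cons b m' =>
      rw [minFold_cons a _ (by simp)]
      exact min_le_of_right_le (ih (fun t ht => h t (by simp [ht])))

lemma minFold_mono (l : List L) (μ ν : L → ℝ) (h : ∀ x, μ x ≤ ν x) :
    minFold (l.map μ) ≤ minFold (l.map ν) := by
  induction l with
  | nil => simp
  | cons a m ih =>
    cases m with
    | nil => simpa [minFold] using h a
    | cons b m' =>
      simp only [List.map_cons]
      rw [minFold_cons (μ a) _ (by simp), minFold_cons (ν a) _ (by simp)]
      simp only [← List.map_cons]
      exact min_le_min (h a) ih

lemma ideal_boxplus {ν : L → ℝ} (hν : FuzzyIdeal ν) (a b : L) :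
    min (ν a) (ν b) ≤ ν (boxplus a b) := by
  obtain ⟨h01, hanti, hup⟩ := hν
  have h1 : ν b ≤ ν (bᶜᶜ) := by
    have := hup b ⊥
    have hb : ν b ≤ ν ⊥ := hanti ⊥ b bot_le
    have : min (ν b) (ν ⊥) ≤ ν (uplus b ⊥) := hup b ⊥
    rw [min_eq_left hb] at this
    simpa [uplus, himp_bot] using this
  calc min (ν a) (ν b) ≤ min (ν a) (ν (bᶜᶜ)) := min_le_min le_rfl h1
    _ ≤ ν (uplus a (bᶜᶜ)) := hup a (bᶜᶜ)
    _ = ν (boxplus a b) := rfl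

lemma ideal_minFold_le {ν : L → ℝ} (hν : FuzzyIdeal ν) (l : List L) (hl : l ≠ []) :
    minFold (l.map ν) ≤ ν (boxFold l) := by
  induction l with
  | nil => exact absurd rfl hl
  | cons a m ih =>
    cases m with
    | nil => simp [minFold, boxFold]
    | cons b m' =>
      rw [List.map_cons, minFold_cons _ _ (by simp), boxFold_cons a _ (by simp)]
      calc min (ν a) (minFold ((b :: m').map ν))
          ≤ min (ν a) (ν (boxFold (b :: m'))) := min_le_min le_rfl (ih (by simp))
        _ ≤ ν (boxplus a (boxFold (b :: m'))) := ideal_boxplus hν _ _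

theorem fuzzyGen_isSmallest (μ : L → ℝ) (hμ : ∀ x, 0 ≤ μ x ∧ μ x ≤ 1) :
    FuzzyIdeal (fuzzyGen μ) ∧
    (∀ x, μ x ≤ fuzzyGen μ x) ∧
      ∀ ν : L → ℝ, FuzzyIdeal ν → (∀ x, μ x ≤ ν x) → ∀ x, fuzzyGen μ x ≤ ν x := by
  set S : L → Set ℝ :=
    fun x => {t : ℝ | ∃ l : List L, l ≠ [] ∧ x ≤ boxFold l ∧ t = minFold (l.map μ)} with hS
  have hmem : ∀ x, μ x ∈ S x := by
    intro x
    exact ⟨[x], by simp, by simp [boxFold], by simp [minFold]⟩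
  have hne : ∀ x, (S x).Nonempty := fun x => ⟨μ x, hmem x⟩
  have hbdd : ∀ x, BddAbove (S x) := by
    intro x
    refine ⟨1, fun t ht => ?_⟩
    obtain ⟨l, _, _, rfl⟩ := ht
    exact minFold_le_one _ (by
      intro t ht
      obtain ⟨a, _, rfl⟩ := List.mem_map.mp ht
      exact (hμ a).2)
  have hgen : ∀ x, fuzzyGen μ x = sSup (S x) := fun x => rfl
  have hle1 : ∀ x, fuzzyGen μ x ≤ 1 := by
    intro x
    rw [hgen]
    refine csSup_le (hne x) ?_
    intro t ht
    obtain ⟨l, _, _, rfl⟩ := ht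
    exact minFold_le_one _ (by
      intro t ht
      obtain ⟨a, _, rfl⟩ := List.mem_map.mp ht
      exact (hμ a).2)
  have hmule : ∀ x, μ x ≤ fuzzyGen μ x := fun x => le_csSup (hbdd x) (hmem x)
  have hanti : ∀ x y : L, x ≤ y → fuzzyGen μ y ≤ fuzzyGen μ x := by
    intro x y hxy
    rw [hgen, hgen]
    refine csSup_le_csSup (hbdd x) (hne y) ?_
    rintro t ⟨l, hl, hyl, rfl⟩
    exact ⟨l, hl, hxy.trans hyl, rfl⟩
  refine ⟨⟨fun x => ⟨(hμ x).1.trans (hmule x), hle1 x⟩, hanti, ?_⟩, hmule, ?_⟩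
  · -- fi₂
    intro x y
    refine le_of_forall_lt ?_
    intro w hw
    obtain ⟨a, ha, hwa⟩ := exists_lt_of_lt_csSup (hne x) (lt_of_lt_of_le hw (min_le_left _ _))
    obtain ⟨b, hb, hwb⟩ := exists_lt_of_lt_csSup (hne y) (lt_of_lt_of_le hw (min_le_right _ _))
    obtain ⟨l, hl, hxl, rfl⟩ := ha
    obtain ⟨l', hl', hyl', rfl⟩ := hb
    have hmemC : min (minFold (l.map μ)) (minFold (l'.map μ)) ∈ S (uplus x y) := by
      refine ⟨l ++ l', by simp [hl], uplus_le_boxFold_append x y l l' hl hl' hxl hyl', ?_⟩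
      rw [List.map_append, minFold_append _ _ (by simpa) (by simpa)]
    calc w < min (minFold (l.map μ)) (minFold (l'.map μ)) := lt_min hwa hwb
      _ ≤ sSup (S (uplus x y)) := le_csSup (hbdd _) hmemC
  · -- minimality
    intro ν hν hμν x
    rw [hgen]
    refine csSup_le (hne x) ?_
    rintro t ⟨l, hl, hxl, rfl⟩
    calc minFold (l.map μ) ≤ minFold (l.map ν) := minFold_mono l μ ν hμν
      _ ≤ ν (boxFold l) := ideal_minFold_le hν l hl
      _ ≤ ν x := hν.2.1 x (boxFold l) hxl
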